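/- arXiv:1801.08308 — 4 statements merged into one kernel-verified Lean document; each statement's English description precedes it below -/
import Mathlib

section
/- Let h₁, h₂ : (0,∞) → [0,∞) be integrable with ∫₀^∞ h₁ = ∫₀^∞ h₂ = 1, and let H_i(x) := ∫_x^∞ h_i, E := H₁ - H₂. Then for all x > 0, (h₁*H₁ - h₂*H₂)(x) = (h₁+h₂)*E(x) - E(x), where f*g(x) := ∫₀^x f(x_*) g(x-x_*) dx_* denotes convolution on (0,∞). -/
/-!
Write `G_i(t) = ∫_{(0,t)} h_i = 1 - H_i(t)`. Expanding `(h₁ + h₂) * E` bilinearly reduces the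
identity to the cross-term relation `h₂ * H₁ - h₁ * H₂ = E`. Substituting `H_i = 1 - G_i` turns its
left side into `G₂(x) - G₁(x) - (h₂ * G₁ - h₁ * G₂)(x)`, and `h₂ * G₁ = h₁ * G₂` because by Fubini
both are the `h₁ ⊗ h₂`-integral over the triangle `{y, z > 0, y + z < x}`.
-/

open MeasureTheory Set

theorem integral_Ioo_eq_integral_Ioi_sub_Ioi {g : ℝ → ℝ} {a b : ℝ} (hg : IntegrableOn g (Ioi a))
    (hab : a ≤ b) : ∫ z in Ioo a b, g z = (∫ z in Ioi a, g z) - ∫ z in Ioi b, g z := by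
  rw [← integral_Ioc_eq_integral_Ioo, ← intervalIntegral.integral_of_le hab,
    intervalIntegral.integral_Ioi_sub_Ioi hg hab]

theorem integral_mul_setIntegral_Iio_sub_comm {μ ν : Measure ℝ} [SFinite μ] [SFinite ν]
    {f g : ℝ → ℝ} (hf : Integrable f μ) (hg : Integrable g ν) (x : ℝ) :
    ∫ y, f y * (∫ z in Iio (x - y), g z ∂ν) ∂μ = ∫ z, g z * (∫ y in Iio (x - z), f y ∂μ) ∂ν := by
  set T : Set (ℝ × ℝ) := {p | p.1 + p.2 < x}
  have hT : MeasurableSet T := measurableSet_lt (by fun_prop) measurable_const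
  set F : ℝ → ℝ → ℝ := fun y z => T.indicator (fun p => f p.1 * g p.2) (y, z)
  have hF_left : ∀ y z, F y z = f y * (Iio (x - y)).indicator g z := by
    intro y z
    simp only [F, T, indicator_apply, mem_ofPred_eq, mem_Iio, lt_sub_iff_add_lt', mul_ite, mul_zero]
  have hF_right : ∀ y z, F y z = g z * (Iio (x - z)).indicator f y := by
    intro y z
    simp only [F, T, indicator_apply, mem_ofPred_eq, mem_Iio, lt_sub_iff_add_lt]
    split_ifs <;> ring
  calc ∫ y, f y * (∫ z in Iio (x - y), g z ∂ν) ∂μ = ∫ y, ∫ z, F y z ∂ν ∂μ := by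
        simp only [hF_left, integral_const_mul, integral_indicator measurableSet_Iio]
    _ = ∫ z, ∫ y, F y z ∂μ ∂ν := integral_integral_swap ((hf.mul_prod hg).indicator hT)
    _ = ∫ z, g z * (∫ y in Iio (x - z), f y ∂μ) ∂ν := by
        simp only [hF_right, integral_const_mul, integral_indicator measurableSet_Iio]

theorem setIntegral_Ioo_mul_integral_Ioo_sub_comm {f g : ℝ → ℝ} (hf : IntegrableOn f (Ioi 0))
    (hg : IntegrableOn g (Ioi 0)) (x : ℝ) :
    ∫ y in Ioo 0 x, f y * ∫ z in Ioo 0 (x - y), g z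
      = ∫ y in Ioo 0 x, g y * ∫ z in Ioo 0 (x - y), f z := by
  have restrict_Ioi : ∀ f g : ℝ → ℝ,
      ∫ y in Ioi 0, f y * ∫ z in Iio (x - y), g z ∂volume.restrict (Ioi 0)
        = ∫ y in Ioo 0 x, f y * ∫ z in Ioo 0 (x - y), g z := by
    intro f g
    simp only [Measure.restrict_restrict measurableSet_Iio, Iio_inter_Ioi]
    refine setIntegral_eq_of_subset_of_forall_sdiff_eq_zero measurableSet_Ioi
      Ioo_subset_Ioi_self fun y ⟨hy, hyx⟩ => ?_
    have hxy : x - y ≤ 0 := by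
      simp only [mem_Ioo, not_and, not_lt] at hyx
      linarith [hyx hy]
    rw [Ioo_eq_empty hxy.not_gt, Measure.restrict_empty, integral_zero_measure, mul_zero]
  rw [← restrict_Ioi, ← restrict_Ioi]
  exact integral_mul_setIntegral_Iio_sub_comm hf hg x

theorem integrableOn_mul_integral_Ioi_sub {f g : ℝ → ℝ} {x : ℝ} (hf : IntegrableOn f (Ioo 0 x))
    (hg : IntegrableOn g (Ioi 0)) :
    IntegrableOn (fun y => f y * ∫ z in Ioi (x - y), g z) (Ioo 0 x) := by
  have hcont : ContinuousOn (fun y => ∫ z in Ioi (x - y), g z) (Icc 0 x) :=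
    hg.continuousOn_Ici_primitive_Ioi.comp (by fun_prop) fun y hy => by
      simp only [mem_Ici]; linarith [hy.2]
  exact hf.mul_continuousOn_of_subset hcont measurableSet_Ioo isCompact_Icc Ioo_subset_Icc_self

theorem setIntegral_Ioo_mul_integral_Ioo_sub {f g : ℝ → ℝ} (hf : IntegrableOn f (Ioi 0))
    (hg : IntegrableOn g (Ioi 0)) (x : ℝ) :
    ∫ y in Ioo 0 x, f y * ∫ z in Ioo 0 (x - y), g z
      = (∫ y in Ioo 0 x, f y) * (∫ z in Ioi 0, g z)
        - ∫ y in Ioo 0 x, f y * ∫ z in Ioi (x - y), g z := by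
  have hf' : IntegrableOn f (Ioo 0 x) := hf.mono_set Ioo_subset_Ioi_self
  rw [← integral_mul_const,
    ← integral_sub (hf'.mul_const _) (integrableOn_mul_integral_Ioi_sub hf' hg)]
  refine setIntegral_congr_fun measurableSet_Ioo fun y hy => ?_
  rw [integral_Ioo_eq_integral_Ioi_sub_Ioi hg (by linarith [hy.2]), mul_sub]

theorem setIntegral_Ioo_mul_integral_Ioi_sub_sub_comm {f g : ℝ → ℝ} (hf : IntegrableOn f (Ioi 0))
    (hg : IntegrableOn g (Ioi 0)) {x : ℝ} (hx : 0 ≤ x) :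
    (∫ y in Ioo 0 x, f y * ∫ z in Ioi (x - y), g z)
        - ∫ y in Ioo 0 x, g y * ∫ z in Ioi (x - y), f z
      = (∫ z in Ioi 0, f z) * (∫ z in Ioi x, g z) - (∫ z in Ioi 0, g z) * ∫ z in Ioi x, f z := by
  have hcomm := setIntegral_Ioo_mul_integral_Ioo_sub_comm hf hg x
  rw [setIntegral_Ioo_mul_integral_Ioo_sub hf hg, setIntegral_Ioo_mul_integral_Ioo_sub hg hf,
    integral_Ioo_eq_integral_Ioi_sub_Ioi hf hx, integral_Ioo_eq_integral_Ioi_sub_Ioi hg hx] at hcomm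
  linarith

theorem convolution_difference_identity_general
    (h₁ h₂ : ℝ → ℝ)
    (h₁int : IntegrableOn h₁ (Ioi 0)) (h₂int : IntegrableOn h₂ (Ioi 0))
    (h₁mass : ∫ x in Ioi (0:ℝ), h₁ x = 1) (h₂mass : ∫ x in Ioi (0:ℝ), h₂ x = 1)
    (H₁ H₂ E : ℝ → ℝ)
    (hH₁ : ∀ x, H₁ x = ∫ y in Ioi x, h₁ y) (hH₂ : ∀ x, H₂ x = ∫ y in Ioi x, h₂ y)
    (hE : ∀ x, E x = H₁ x - H₂ x) :
    ∀ x ∈ Ioi (0:ℝ),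
      (∫ y in Ioo (0:ℝ) x, h₁ y * H₁ (x - y))
        - (∫ y in Ioo (0:ℝ) x, h₂ y * H₂ (x - y))
      = (∫ y in Ioo (0:ℝ) x, (h₁ y + h₂ y) * E (x - y)) - E x := by
  intro x hx
  simp only [hE, hH₁, hH₂]
  have I : ∀ {f g : ℝ → ℝ}, IntegrableOn f (Ioi 0) → IntegrableOn g (Ioi 0) →
      IntegrableOn (fun y => f y * ∫ z in Ioi (x - y), g z) (Ioo 0 x) :=
    fun hf hg => integrableOn_mul_integral_Ioi_sub (hf.mono_set Ioo_subset_Ioi_self) hg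
  have hcross := setIntegral_Ioo_mul_integral_Ioi_sub_sub_comm h₂int h₁int (le_of_lt hx)
  rw [h₁mass, h₂mass] at hcross
  simp_rw [add_mul, mul_sub]
  rw [integral_add (by exact (I h₁int h₁int).sub (I h₁int h₂int))
      (by exact (I h₂int h₁int).sub (I h₂int h₂int)),
    integral_sub (I h₁int h₁int) (I h₁int h₂int), integral_sub (I h₂int h₁int) (I h₂int h₂int)]
  linarith

theorem convolution_difference_identity
    (h₁ h₂ : ℝ → ℝ)
    (h₁nonneg : ∀ x ∈ Ioi (0:ℝ), 0 ≤ h₁ x) (h₂nonneg : ∀ x ∈ Ioi (0:ℝ), 0 ≤ h₂ x)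
    (h₁int : IntegrableOn h₁ (Ioi 0)) (h₂int : IntegrableOn h₂ (Ioi 0))
    (h₁mass : ∫ x in Ioi (0:ℝ), h₁ x = 1) (h₂mass : ∫ x in Ioi (0:ℝ), h₂ x = 1)
    (H₁ H₂ E : ℝ → ℝ)
    (hH₁ : ∀ x, H₁ x = ∫ y in Ioi x, h₁ y) (hH₂ : ∀ x, H₂ x = ∫ y in Ioi x, h₂ y)
    (hE : ∀ x, E x = H₁ x - H₂ x) :
    ∀ x ∈ Ioi (0:ℝ),
      (∫ y in Ioo (0:ℝ) x, h₁ y * H₁ (x - y))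
        - (∫ y in Ioo (0:ℝ) x, h₂ y * H₂ (x - y))
      = (∫ y in Ioo (0:ℝ) x, (h₁ y + h₂ y) * E (x - y)) - E x :=
  convolution_difference_identity_general h₁ h₂ h₁int h₂int h₁mass h₂mass H₁ H₂ E hH₁ hH₂ hE
end

section
/- Let h : (0,∞) → [0,∞) be integrable, H(x) := ∫_x^∞ h(x_*) dx_*, and suppose ∫₀^∞ h*h(x) dx < ∞ where h*h(x) = ∫₀^x h(x_*)h(x-x_*) dx_*. Then for every x₀ > 0, ∫_{x₀}^∞ (h*h)(x) dx = (h*H)(x₀) + (∫₀^∞ h) · H(x₀). -/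
open MeasureTheory Set

/-!
Extend `h` by zero to `g` on `ℝ`. The truncated convolution is then the full convolution
`∫ y, g y * g (x - y)`, and since `g` is integrable, Fubini and a translation give
`∫_{x₀}^∞ g ⋆ g = ∫ g(y) G(x₀ - y) dy` with `G t = ∫_t^∞ g`. Splitting at `y = x₀`: for `y < x₀`
the tail `G(x₀ - y)` is `H(x₀ - y)`, while for `y ≥ x₀` it is the full mass `∫₀^∞ h`, and the
remaining `∫_{x₀}^∞ h` is `H x₀`.
-/

theorem setIntegral_Ioi_comp_sub_right (g : ℝ → ℝ) (a y : ℝ) :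
    ∫ x in Ioi a, g (x - y) = ∫ u in Ioi (a - y), g u := by
  have := (measurePreserving_sub_right volume y).setIntegral_preimage_emb
    (measurableEmbedding_subRight y) g (Ioi (a - y))
  simpa using this

theorem integrable_mul_comp_sub_restrict_prod {f g : ℝ → ℝ} (hf : Integrable f)
    (hg : Integrable g) (s : Set ℝ) :
    Integrable (fun p : ℝ × ℝ => f p.2 * g (p.1 - p.2)) ((volume.restrict s).prod volume) := by
  rw [← Measure.restrict_univ (μ := volume), Measure.prod_restrict, Measure.restrict_univ]
  exact (hf.convolution_integrand (ContinuousLinearMap.mul ℝ ℝ) hg).restrict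

theorem integrable_mul_setIntegral_Ioi_sub {f g : ℝ → ℝ} (hf : Integrable f)
    (hg : Integrable g) (a : ℝ) :
    Integrable (fun y => f y * ∫ u in Ioi (a - y), g u) := by
  have := (integrable_mul_comp_sub_restrict_prod hf hg (Ioi a)).integral_prod_right
  simpa only [integral_const_mul, setIntegral_Ioi_comp_sub_right] using this

theorem setIntegral_Ioi_convolution {f g : ℝ → ℝ} (hf : Integrable f)
    (hg : Integrable g) (a : ℝ) :
    ∫ x in Ioi a, ∫ y, f y * g (x - y) = ∫ y, f y * ∫ u in Ioi (a - y), g u := by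
  simp only [← integral_const_mul, ← setIntegral_Ioi_comp_sub_right]
  exact integral_integral_swap (integrable_mul_comp_sub_restrict_prod hf hg (Ioi a))

theorem indicator_Ioi_mul_indicator_Ioi_sub (h : ℝ → ℝ) (x y : ℝ) :
    (Ioi 0).indicator h y * (Ioi 0).indicator h (x - y)
      = (Ioo 0 x).indicator (fun y => h y * h (x - y)) y := by
  by_cases hy : 0 < y <;> by_cases hxy : y < x <;>
    simp [indicator, hy, hxy, sub_pos]

theorem setIntegral_Ioo_mul_comp_sub (h : ℝ → ℝ) (x : ℝ) :
    ∫ y in Ioo 0 x, h y * h (x - y)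
      = ∫ y, (Ioi 0).indicator h y * (Ioi 0).indicator h (x - y) := by
  simp only [indicator_Ioi_mul_indicator_Ioi_sub, integral_indicator measurableSet_Ioo]

theorem setIntegral_Ioi_indicator_Ioi (h : ℝ → ℝ) (t : ℝ) :
    ∫ u in Ioi t, (Ioi 0).indicator h u = ∫ u in Ioi (max t 0), h u := by
  rw [setIntegral_indicator measurableSet_Ioi, Ioi_inter_Ioi]

theorem tail_of_selfconvolution_general
    (h : ℝ → ℝ)
    (hint : IntegrableOn h (Ioi 0))
    (H : ℝ → ℝ) (hH : ∀ x, H x = ∫ y in Ioi x, h y) :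
    ∀ x₀ ∈ Ioi (0:ℝ),
      (∫ x in Ioi x₀, ∫ y in Ioo (0:ℝ) x, h y * h (x - y))
        = (∫ y in Ioo (0:ℝ) x₀, h y * H (x₀ - y)) + (∫ x in Ioi (0:ℝ), h x) * H x₀ := by
  intro x₀ (hx₀ : 0 < x₀)
  obtain rfl : H = fun x => ∫ y in Ioi x, h y := funext hH
  have hg : Integrable ((Ioi 0).indicator h) := (integrable_indicator_iff measurableSet_Ioi).2 hint
  set k := fun y => h y * ∫ u in Ioi (max (x₀ - y) 0), h u
  have hk_eq : (fun y => (Ioi 0).indicator h y * ∫ u in Ioi (x₀ - y), (Ioi 0).indicator h u)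
      = (Ioi 0).indicator k := by
    ext y
    simp only [k, setIntegral_Ioi_indicator_Ioi, indicator_mul_left]
  have hk : IntegrableOn k (Ioi 0) := by
    rw [← integrable_indicator_iff measurableSet_Ioi, ← hk_eq]
    exact integrable_mul_setIntegral_Ioi_sub hg hg x₀
  calc (∫ x in Ioi x₀, ∫ y in Ioo 0 x, h y * h (x - y))
      = ∫ y in Ioi 0, k y := by
        simp only [setIntegral_Ioo_mul_comp_sub]
        rw [setIntegral_Ioi_convolution hg hg, hk_eq, integral_indicator measurableSet_Ioi]
    _ = (∫ y in Ioo 0 x₀, k y) + ∫ y in Ici x₀, k y := by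
        rw [← Ioo_union_Ici_eq_Ioi hx₀, setIntegral_union
          ((Iio_disjoint_Ici le_rfl).mono_left Ioo_subset_Iio_self) measurableSet_Ici
          (hk.mono_set Ioo_subset_Ioi_self) (hk.mono_set (Ici_subset_Ioi.2 hx₀))]
    _ = _ := by
        congr 1
        · refine setIntegral_congr_fun measurableSet_Ioo fun y hy => ?_
          simp only [k, max_eq_left (sub_pos.2 hy.2).le]
        · rw [setIntegral_congr_fun measurableSet_Ici fun y (hy : x₀ ≤ y) =>
            show k y = h y * ∫ u in Ioi 0, h u by simp only [k, max_eq_right (sub_nonpos.2 hy)],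
            integral_mul_const, integral_Ici_eq_integral_Ioi, mul_comm]

theorem tail_of_selfconvolution
    (h : ℝ → ℝ) (hnonneg : ∀ x ∈ Ioi (0:ℝ), 0 ≤ h x)
    (hint : IntegrableOn h (Ioi 0))
    (hconvint : IntegrableOn (fun x => ∫ y in Ioo (0:ℝ) x, h y * h (x - y)) (Ioi 0))
    (H : ℝ → ℝ) (hH : ∀ x, H x = ∫ y in Ioi x, h y) :
    ∀ x₀ ∈ Ioi (0:ℝ),
      (∫ x in Ioi x₀, ∫ y in Ioo (0:ℝ) x, h y * h (x - y))
        = (∫ y in Ioo (0:ℝ) x₀, h y * H (x₀ - y)) + (∫ x in Ioi (0:ℝ), h x) * H x₀ :=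
  tail_of_selfconvolution_general h hint H hH
end

section
/- Let P, N ⊆ (0,∞) be measurable sets such that |N ∩ (0,x)| = 0 for almost every x ∈ P and |P ∩ (0,x_*)| = 0 for almost every x_* ∈ N. Then |P| · |N| = 0, where |·| is Lebesgue measure. -/
open MeasureTheory Set Filter Real
open scoped Topology

theorem measure_product_vanishes
    (P N : Set ℝ) (hPm : MeasurableSet P) (hNm : MeasurableSet N)
    (hP : P ⊆ Ioi 0) (hN : N ⊆ Ioi 0)
    (h1 : ∀ᵐ x ∂(volume.restrict P), volume (N ∩ Ioo 0 x) = 0)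
    (h2 : ∀ᵐ x ∂(volume.restrict N), volume (P ∩ Ioo 0 x) = 0) :
    volume P * volume N = 0 := by
  have hPN : MeasurableSet (P ×ˢ N) := hPm.prod hNm
  set A := (P ×ˢ N) ∩ {p : ℝ × ℝ | p.2 < p.1} with hA_def
  set B := (P ×ˢ N) ∩ {p : ℝ × ℝ | p.1 < p.2} with hB_def
  set D := (P ×ˢ N) ∩ {p : ℝ × ℝ | p.1 = p.2} with hD_def
  have hAm : MeasurableSet A := hPN.inter (measurableSet_lt measurable_snd measurable_fst)
  have hBm : MeasurableSet B := hPN.inter (measurableSet_lt measurable_fst measurable_snd)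
  have hDm : MeasurableSet D := hPN.inter (measurableSet_eq_fun measurable_fst measurable_snd)
  have hsub : P ×ˢ N ⊆ A ∪ B ∪ D := by
    intro p hp
    rcases lt_trichotomy p.2 p.1 with h | h | h
    · exact Or.inl (Or.inl ⟨hp, h⟩)
    · exact Or.inr ⟨hp, h.symm⟩
    · exact Or.inl (Or.inr ⟨hp, h⟩)
  have hAvol : volume A = 0 := by
    rw [Measure.volume_eq_prod, Measure.prod_apply hAm]
    have hpre : ∀ x : ℝ, volume (Prod.mk x ⁻¹' A) =
        P.indicator (fun x => volume (N ∩ Ioo 0 x)) x := by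
      intro x
      by_cases hx : x ∈ P
      · rw [indicator_of_mem hx]
        congr 1
        ext y
        simp only [hA_def, mem_preimage, mem_inter_iff, mem_prod, mem_setOf_eq, mem_Ioo]
        exact ⟨fun ⟨⟨_, hy⟩, hlt⟩ => ⟨hy, hN hy, hlt⟩, fun ⟨hy, h0, hlt⟩ => ⟨⟨hx, hy⟩, hlt⟩⟩
      · rw [indicator_of_notMem hx]
        have he : Prod.mk x ⁻¹' A = ∅ := by
          ext y
          simp only [hA_def, mem_preimage, mem_inter_iff, mem_prod, mem_setOf_eq,
            mem_empty_iff_false]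
          tauto
        simp [he]
    calc ∫⁻ x, volume (Prod.mk x ⁻¹' A)
        = ∫⁻ x, P.indicator (fun x => volume (N ∩ Ioo 0 x)) x := by
          exact lintegral_congr hpre
      _ = ∫⁻ x in P, volume (N ∩ Ioo 0 x) := lintegral_indicator hPm _
      _ = ∫⁻ x in P, (0 : ENNReal) := lintegral_congr_ae h1
      _ = 0 := lintegral_zero
  have hBvol : volume B = 0 := by
    rw [Measure.volume_eq_prod, Measure.prod_apply_symm hBm]
    have hpre : ∀ y : ℝ, volume ((fun x => (x, y)) ⁻¹' B) =
        N.indicator (fun y => volume (P ∩ Ioo 0 y)) y := by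
      intro y
      by_cases hy : y ∈ N
      · rw [indicator_of_mem hy]
        congr 1
        ext x
        simp only [hB_def, mem_preimage, mem_inter_iff, mem_prod, mem_setOf_eq, mem_Ioo]
        exact ⟨fun ⟨⟨hx, _⟩, hlt⟩ => ⟨hx, hP hx, hlt⟩, fun ⟨hx, h0, hlt⟩ => ⟨⟨hx, hy⟩, hlt⟩⟩
      · rw [indicator_of_notMem hy]
        have he : (fun x => (x, y)) ⁻¹' B = ∅ := by
          ext x
          simp only [hB_def, mem_preimage, mem_inter_iff, mem_prod, mem_setOf_eq,
            mem_empty_iff_false]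
          tauto
        simp [he]
    calc ∫⁻ y, volume ((fun x => (x, y)) ⁻¹' B)
        = ∫⁻ y, N.indicator (fun y => volume (P ∩ Ioo 0 y)) y := lintegral_congr hpre
      _ = ∫⁻ y in N, volume (P ∩ Ioo 0 y) := lintegral_indicator hNm _
      _ = ∫⁻ y in N, (0 : ENNReal) := lintegral_congr_ae h2
      _ = 0 := lintegral_zero
  have hDvol : volume D = 0 := by
    rw [Measure.volume_eq_prod, Measure.prod_apply hDm]
    have hpre : ∀ x : ℝ, volume (Prod.mk x ⁻¹' D) = 0 := by
      intro x
      refine measure_mono_null (fun y hy => ?_) (volume_singleton (a := x))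
      simp only [hD_def, mem_preimage, mem_inter_iff, mem_setOf_eq] at hy
      simp [hy.2.symm]
    simp only [hpre, lintegral_zero]
  have hzero : volume (P ×ˢ N) = 0 :=
    measure_mono_null hsub (by
      refine measure_union_null (measure_union_null hAvol hBvol) hDvol)
  rw [← hzero, Measure.volume_eq_prod, Measure.prod_prod]
end

section
/- Let h : (0,∞) → [0,∞) be C¹ and satisfy, for some α > 0 and w > 0, the equation w x^{1+α} h'(x) + w(α+2) x^α h(x) + (h*h)(x) - 2 M₀(h) h(x) = 0 for all x > 0, together with the decay x^{1+α}h(x) → 0 as x → ∞ and integrability of h, x^α h, and h*h on (0,∞). Then H(x) := ∫_x^∞ h satisfies w x^{1+α} H'(x) + w x^α H(x) + αw ∫_x^∞ x_*^{α-1} H(x_*) dx_* + (h*H)(x) - M₀(h) H(x) = 0 for all x > 0, provided additionally x^α H(x) → 0 as x → ∞. -/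
open MeasureTheory Set Filter Real
open scoped Topology

/-!
Integrate the equation over `(x, ∞)`. By the equation itself, `(y ^ (1 + α) h)'` is integrable
there, so by the decay of `y ^ (1 + α) h` it integrates to `-x ^ (1 + α) h x`. Integration by
parts against `H' = -h` (with `y ^ α H → 0`) turns `∫_x^∞ y ^ α h` into
`x ^ α H x + α ∫_x^∞ y ^ (α - 1) H`. For the quadratic term, extend `h` by zero to the whole line;
Fubini and a translation give `∫_x^∞ (h * h) = ∫ h s · H (x - s) ds`, and since the tail of the
extension equals `M₀(h)` at nonpositive points this is `(h * H)(x) + M₀(h) H(x)`.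
-/

section Tail

variable {E : Type*} [NormedAddCommGroup E] [NormedSpace ℝ E]

theorem hasDerivAt_integral_Ioi [CompleteSpace E] {f : ℝ → E} {a y : ℝ}
    (hf : IntegrableOn f (Ioi a)) (hay : a < y) (hfy : ContinuousAt f y) : HasDerivAt (fun x => ∫ t in Ioi x, f t) (-f y) y := by
  have hprim : HasDerivAt (fun x => ∫ t in a..x, f t) (f y) y :=
    intervalIntegral.integral_hasDerivAt_right
      ((intervalIntegrable_iff_integrableOn_Ioc_of_le hay.le).2 (hf.mono_set Ioc_subset_Ioi_self))
      (_root_.AEStronglyMeasurable.stronglyMeasurableAtFilter_of_mem hf.aestronglyMeasurable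
        (Ioi_mem_nhds hay)) hfy
  refine (hprim.const_sub (∫ t in Ioi a, f t)).congr_of_eventuallyEq ?_
  filter_upwards [Ioi_mem_nhds hay] with x hx
  rw [← intervalIntegral.integral_Ioi_sub_Ioi hf (le_of_lt hx), sub_sub_cancel]

theorem tendsto_integral_Ioi_atTop_zero {f : ℝ → E} {a : ℝ} (hf : IntegrableOn f (Ioi a)) :
    Tendsto (fun x => ∫ t in Ioi x, f t) atTop (𝓝 0) := by
  have hlim :=
    (intervalIntegral_tendsto_integral_Ioi a hf tendsto_id).const_sub (∫ t in Ioi a, f t)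
  rw [sub_self] at hlim
  refine hlim.congr' ?_
  filter_upwards [Ici_mem_atTop a] with x hx
  exact intervalIntegral.integral_Ioi_sub_Ioi hf hx ▸ sub_sub_cancel _ _

theorem setIntegral_Ioi_comp_sub (g : ℝ → E) (x s : ℝ) :
    ∫ y in Ioi x, g (y - s) = ∫ u in Ioi (x - s), g u := by
  rw [← integral_indicator measurableSet_Ioi, ← integral_indicator measurableSet_Ioi,
    ← integral_sub_right_eq_self ((Ioi (x - s)).indicator g) s]
  congr 1 with y
  simp only [indicator, mem_Ioi, sub_lt_sub_iff_right]

theorem integrable_convolution_integrand_restrict {f g : ℝ → ℝ} (hf : Integrable f)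
    (hg : Integrable g) (t : Set ℝ) :
    Integrable (fun p : ℝ × ℝ => f p.2 * g (p.1 - p.2)) ((volume.restrict t).prod volume) :=
  (hf.convolution_integrand (ContinuousLinearMap.mul ℝ ℝ) hg).mono_measure
    (Measure.prod_mono Measure.restrict_le_self le_rfl)

theorem setIntegral_Ioi_const_mul_comp_sub {f g : ℝ → ℝ} (x s : ℝ) :
    ∫ y in Ioi x, f s * g (y - s) = f s * ∫ u in Ioi (x - s), g u := by
  rw [integral_const_mul, setIntegral_Ioi_comp_sub]

theorem integrable_mul_integral_Ioi_sub {f g : ℝ → ℝ} (hf : Integrable f) (hg : Integrable g)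
    (x : ℝ) : Integrable (fun s => f s * ∫ u in Ioi (x - s), g u) := by
  simpa only [setIntegral_Ioi_const_mul_comp_sub] using
    (integrable_convolution_integrand_restrict hf hg (Ioi x)).integral_prod_right

theorem integral_Ioi_integral_mul_sub {f g : ℝ → ℝ} (hf : Integrable f) (hg : Integrable g)
    (x : ℝ) :
    ∫ y in Ioi x, ∫ s, f s * g (y - s) = ∫ s, f s * ∫ u in Ioi (x - s), g u := by
  simp only [← setIntegral_Ioi_const_mul_comp_sub]
  exact integral_integral_swap (integrable_convolution_integrand_restrict hf hg (Ioi x))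

theorem integral_indicator_mul_indicator_comp_sub (h g : ℝ → ℝ) (y : ℝ) :
    ∫ s, (Ioi 0).indicator h s * (Ioi 0).indicator g (y - s)
      = ∫ s in Ioo 0 y, h s * g (y - s) := by
  rw [← integral_indicator measurableSet_Ioo]
  congr 1 with s
  by_cases hs : s ∈ Ioo 0 y
  · have hys : y - s ∈ Ioi 0 := sub_pos.2 hs.2
    rw [indicator_of_mem hs, indicator_of_mem (mem_Ioi.2 hs.1), indicator_of_mem hys]
  · rw [indicator_of_notMem hs]
    rcases not_and_or.1 hs with hs0 | hsy
    · rw [indicator_of_notMem (notMem_Ioi.2 (not_lt.1 hs0)), zero_mul]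
    · rw [indicator_of_notMem (by simpa using hsy) g, mul_zero]

theorem integral_Ioi_integral_Ioo_mul_sub {h g : ℝ → ℝ} (hh : IntegrableOn h (Ioi 0))
    (hg : IntegrableOn g (Ioi 0)) {x : ℝ} (hx : 0 < x) :
    ∫ y in Ioi x, ∫ s in Ioo 0 y, h s * g (y - s)
      = (∫ s in Ioo 0 x, h s * ∫ u in Ioi (x - s), g u)
        + (∫ s in Ioi x, h s) * ∫ u in Ioi 0, g u := by
  have hf := (integrable_indicator_iff measurableSet_Ioi).2 hh
  have hg' := (integrable_indicator_iff measurableSet_Ioi).2 hg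
  have hsplit : (fun s => (Ioi 0).indicator h s * ∫ u in Ioi (x - s), (Ioi 0).indicator g u)
      = (Ioi 0).indicator (fun s => h s * ∫ u in Ioi (max (x - s) 0), g u) := by
    ext s
    simp only [setIntegral_indicator measurableSet_Ioi, Ioi_inter_Ioi, indicator_mul_left]
  have hint : IntegrableOn (fun s => h s * ∫ u in Ioi (max (x - s) 0), g u) (Ioi 0) := by
    rw [← integrable_indicator_iff measurableSet_Ioi, ← hsplit]
    exact integrable_mul_integral_Ioi_sub hf hg' x
  simp_rw [← integral_indicator_mul_indicator_comp_sub, integral_Ioi_integral_mul_sub hf hg' x,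
    hsplit, integral_indicator measurableSet_Ioi]
  rw [← Ioo_union_Ici_eq_Ioi hx] at hint
  conv_lhs => rw [← Ioo_union_Ici_eq_Ioi hx]
  rw [setIntegral_union ((Iio_disjoint_Ici le_rfl).mono_left Ioo_subset_Iio_self)
    measurableSet_Ici (hint.mono_set subset_union_left) (hint.mono_set subset_union_right),
    ← integral_Ici_eq_integral_Ioi, ← integral_mul_const]
  congr 1
  · refine setIntegral_congr_fun measurableSet_Ioo fun s hs => ?_
    simp only [max_eq_left (sub_pos.2 hs.2).le]
  · refine setIntegral_congr_fun measurableSet_Ici fun s hs => ?_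
    simp only [max_eq_right (sub_nonpos.2 (mem_Ici.1 hs))]

theorem integral_Ioi_deriv_rpow_mul_eq_sub {α x : ℝ} {h H : ℝ → ℝ} (hα : 0 ≤ α) (hx : 0 < x)
    (hh : ContinuousOn h (Ioi 0)) (hH : ∀ y ∈ Ioi 0, HasDerivAt H (-h y) y)
    (hH0 : ∀ y ∈ Ioi 0, 0 ≤ H y) (hint : IntegrableOn (fun y => y ^ α * h y) (Ioi 0))
    (hdecay : Tendsto (fun y => y ^ α * H y) atTop (𝓝 0)) :
    α * ∫ y in Ioi x, y ^ (α - 1) * H y = (∫ y in Ioi x, y ^ α * h y) - x ^ α * H x := by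
  have hderiv : ∀ y ∈ Ici x, HasDerivAt (fun y => y ^ α * H y - ∫ t in Ioi y, t ^ α * h t)
      (α * (y ^ (α - 1) * H y)) y := by
    intro y hy
    have hy0 : 0 < y := hx.trans_le hy
    have hcont : ContinuousAt (fun t => t ^ α * h t) y :=
      (continuousAt_rpow_const y α (Or.inl hy0.ne')).mul (hh.continuousAt (Ioi_mem_nhds hy0))
    refine (((hasDerivAt_rpow_const (p := α) (Or.inl hy0.ne')).mul (hH y hy0)).sub
      (hasDerivAt_integral_Ioi hint hy0 hcont)).congr_deriv ?_
    ring
  have hlim : Tendsto (fun y => y ^ α * H y - ∫ t in Ioi y, t ^ α * h t) atTop (𝓝 (0 - 0)) :=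
    hdecay.sub (tendsto_integral_Ioi_atTop_zero hint)
  have hnonneg : ∀ y ∈ Ioi x, 0 ≤ α * (y ^ (α - 1) * H y) := fun y hy =>
    mul_nonneg hα (mul_nonneg (rpow_nonneg (hx.trans hy).le _) (hH0 y (hx.trans hy)))
  rw [← integral_const_mul, integral_Ioi_of_hasDerivAt_of_nonneg' hderiv hnonneg hlim]
  ring

theorem tail_equation_from_h_equation_general
    (α w : ℝ) (hα : 0 < α) (hw : 0 < w)
    (h h' : ℝ → ℝ)
    (hderiv : ∀ x ∈ Ioi (0:ℝ), HasDerivAt h (h' x) x)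
    (hnonneg : ∀ x ∈ Ioi (0:ℝ), 0 ≤ h x)
    (heq : ∀ x ∈ Ioi (0:ℝ),
      w * x ^ (1 + α) * h' x + w * (α + 2) * x ^ α * h x
        + (∫ y in Ioo (0:ℝ) x, h y * h (x - y))
        - 2 * (∫ y in Ioi (0:ℝ), h y) * h x = 0)
    (hdecay : Tendsto (fun x => x ^ (1 + α) * h x) atTop (𝓝 0))
    (hint : IntegrableOn h (Ioi 0))
    (hint' : IntegrableOn (fun x => x ^ α * h x) (Ioi 0))
    (hconvint : IntegrableOn (fun x => ∫ y in Ioo (0:ℝ) x, h y * h (x - y)) (Ioi 0))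
    (H : ℝ → ℝ) (hH : ∀ x, H x = ∫ y in Ioi x, h y)
    (hHdecay : Tendsto (fun x => x ^ α * H x) atTop (𝓝 0)) :
    ∀ x ∈ Ioi (0:ℝ),
      w * x ^ (1 + α) * (-(h x)) + w * x ^ α * H x
        + α * w * (∫ y in Ioi x, y ^ (α - 1) * H y)
        + (∫ y in Ioo (0:ℝ) x, h y * H (x - y))
        - (∫ y in Ioi (0:ℝ), h y) * H x = 0 := by
  intro x hx
  set M := ∫ y in Ioi (0:ℝ), h y
  set C := fun y => ∫ s in Ioo (0:ℝ) y, h s * h (y - s)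
  have hcont : ContinuousOn h (Ioi 0) := fun y hy => (hderiv y hy).continuousAt.continuousWithinAt
  have hHderiv : ∀ y ∈ Ioi (0:ℝ), HasDerivAt H (-h y) y := fun y hy => funext hH ▸
    hasDerivAt_integral_Ioi hint hy (hcont.continuousAt (Ioi_mem_nhds hy))
  have hHnonneg : ∀ y ∈ Ioi (0:ℝ), 0 ≤ H y := fun y hy => hH y ▸
    setIntegral_nonneg measurableSet_Ioi fun t ht => hnonneg t (mem_Ioi.2 (lt_trans hy ht))
  -- the equation is a formula for the derivative of `y ^ (1 + α) * h y`
  have hflux : ∀ y ∈ Ici x, HasDerivAt (fun y => y ^ (1 + α) * h y)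
      (w⁻¹ * (2 * M * h y - C y) - y ^ α * h y) y := by
    intro y hy
    have hy0 : 0 < y := hx.trans_le hy
    have hpow := hasDerivAt_rpow_const (p := 1 + α) (Or.inl hy0.ne')
    rw [add_sub_cancel_left] at hpow
    refine (hpow.mul (hderiv y hy0)).congr_deriv ?_
    field_simp
    linear_combination heq y hy0
  have hIx : Ioi x ⊆ Ioi 0 := Ioi_subset_Ioi hx.le
  have hMh : IntegrableOn (fun y => 2 * M * h y) (Ioi x) := (hint.mono_set hIx).const_mul _
  have hsource : IntegrableOn (fun y => w⁻¹ * (2 * M * h y - C y)) (Ioi x) :=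
    (hMh.sub (hconvint.mono_set hIx)).const_mul w⁻¹
  have hflux_int := integral_Ioi_of_hasDerivAt_of_tendsto' hflux
    (hsource.sub (hint'.mono_set hIx)) hdecay
  rw [integral_sub hsource (hint'.mono_set hIx), integral_const_mul,
    integral_sub hMh (hconvint.mono_set hIx), integral_const_mul, ← hH] at hflux_int
  field_simp at hflux_int
  have hparts := integral_Ioi_deriv_rpow_mul_eq_sub hα.le hx hcont hHderiv hHnonneg hint' hHdecay
  have hconv_tail := integral_Ioi_integral_Ioo_mul_sub hint hint hx
  simp only [← hH, show H 0 = M from hH 0] at hconv_tail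
  linear_combination -hflux_int + w * hparts - hconv_tail

theorem tail_equation_from_h_equation
    (α w : ℝ) (hα : 0 < α) (hw : 0 < w)
    (h h' : ℝ → ℝ)
    (hderiv : ∀ x ∈ Ioi (0:ℝ), HasDerivAt h (h' x) x)
    (hderiv_cont : ContinuousOn h' (Ioi 0))
    (hnonneg : ∀ x ∈ Ioi (0:ℝ), 0 ≤ h x)
    (heq : ∀ x ∈ Ioi (0:ℝ),
      w * x ^ (1 + α) * h' x + w * (α + 2) * x ^ α * h x
        + (∫ y in Ioo (0:ℝ) x, h y * h (x - y))
        - 2 * (∫ y in Ioi (0:ℝ), h y) * h x = 0)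
    (hdecay : Tendsto (fun x => x ^ (1 + α) * h x) atTop (𝓝 0))
    (hint : IntegrableOn h (Ioi 0))
    (hint' : IntegrableOn (fun x => x ^ α * h x) (Ioi 0))
    (hconvint : IntegrableOn (fun x => ∫ y in Ioo (0:ℝ) x, h y * h (x - y)) (Ioi 0))
    (H : ℝ → ℝ) (hH : ∀ x, H x = ∫ y in Ioi x, h y)
    (hHdecay : Tendsto (fun x => x ^ α * H x) atTop (𝓝 0)) :
    ∀ x ∈ Ioi (0:ℝ),
      w * x ^ (1 + α) * (-(h x)) + w * x ^ α * H x
        + α * w * (∫ y in Ioi x, y ^ (α - 1) * H y)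
        + (∫ y in Ioo (0:ℝ) x, h y * H (x - y))
        - (∫ y in Ioi (0:ℝ), h y) * H x = 0 :=
  tail_equation_from_h_equation_general α w hα hw h h' hderiv hnonneg heq hdecay hint hint' hconvint
    H hH hHdecay
end Tail
end
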